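/- arXiv:2311.08504 — 4 statements merged into one kernel-verified Lean document; each statement's English description precedes it below -/
import Mathlib

section
/- Under the hypotheses of the previous result (stationarity equations (a), (b), (c) of the M1 saddle point problem with $\alpha=\rho$ established), the vector $\beta$ satisfies the supervised logistic score equation using only the labeled data: $\sum_{i=1}^n \{y_i - \frac{\rho\exp(z_i^T\beta)}{1-\rho+\rho\exp(z_i^T\beta)}\} z_i = 0$. Equivalently, with $\beta^c = \beta + (\log\frac{\rho}{1-\rho}, 0, \dots, 0)^T$, $\sum_{i=1}^n \{y_i - \frac{\exp(z_i^T\beta^c)}{1+\exp(z_i^T\beta^c)}\} z_i = 0$, so the ETM-based estimator of the logistic regression parameters coincides algebraically with the supervised logistic MLE. -/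
/-!
Write `E = exp (zᵀβ)` and `π_a(E) = a E / (1 - a + a E)` for the posterior probability of `y = 1`
in the two-component mixture with proportion `a`. Multiplying by `a (1 - a)`, equation (a) says
that the posterior weights `π_α` average to `α` over all `N` observations, and equation (b) that the
`π_ρ` of the unlabelled points together with the labels `y` average to `ρ`. Since `z i 0 = 1`,
equation (c) at the intercept coordinate subtracts the two, leaving `(ρ - α) N = 0`, so `α = ρ`.
With `α = ρ` the unlabelled terms of (c) cancel and the logistic score on the labelled data remains;
shifting the intercept by `log (ρ / (1 - ρ))` turns `π_ρ` into the standard logistic function.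
-/

open Real Finset

/-- Posterior probability of the second component of the mixture `(1 - a) f₀ + a f₁`
when `f₁ / f₀ = E`. -/
noncomputable def mixturePosterior (a E : ℝ) : ℝ := a * E / (1 - a + a * E)

section MixturePosterior

variable {a : ℝ}

lemma mixture_denom_pos (ha : a ∈ Set.Ioo 0 1) {E : ℝ} (hE : 0 < E) : 0 < 1 - a + a * E := by
  nlinarith [ha.1, ha.2]

lemma sub_one_div_mixture_denom (ha : a ∈ Set.Ioo 0 1) {E : ℝ} (hE : 0 < E) :
    (E - 1) / (1 - a + a * E) = (mixturePosterior a E - a) / (a * (1 - a)) := by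
  have hD := mixture_denom_pos ha hE
  have : 1 - a ≠ 0 := by linarith [ha.2]
  rw [mixturePosterior, div_sub' hD.ne', div_div,
    div_eq_div_iff hD.ne' (mul_ne_zero hD.ne' (mul_ne_zero ha.1.ne' this))]
  ring

lemma bernoulli_score_eq (ha : a ∈ Set.Ioo 0 1) (y : ℝ) :
    y / a - (1 - y) / (1 - a) = (y - a) / (a * (1 - a)) := by
  have : 1 - a ≠ 0 := by linarith [ha.2]
  field_simp [ha.1.ne']
  ring

variable {ι : Type*} {s t : Finset ι} {E y : ι → ℝ}

lemma sum_mixturePosterior_eq_of_score (ha : a ∈ Set.Ioo 0 1) (hE : ∀ i ∈ s, 0 < E i)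
    (h : ∑ i ∈ s, (1 - E i) / (1 - a + a * E i) = 0) :
    ∑ i ∈ s, mixturePosterior a (E i) = a * #s := by
  have hpos : 0 < a * (1 - a) := mul_pos ha.1 (by linarith [ha.2])
  simp only [← neg_sub (E _) 1, neg_div] at h
  rw [sum_neg_distrib, neg_eq_zero,
    sum_congr rfl fun i hi => sub_one_div_mixture_denom ha (hE i hi), ← sum_div,
    div_eq_zero_iff, sum_sub_distrib, sum_const, nsmul_eq_mul] at h
  rcases h with h | h
  · linarith
  · exact absurd h hpos.ne'

lemma sum_mixturePosterior_add_sum_eq_of_score (ha : a ∈ Set.Ioo 0 1) (hE : ∀ i ∈ s, 0 < E i)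
    (h : ∑ i ∈ s, (E i - 1) / (1 - a + a * E i) + ∑ i ∈ t, (y i / a - (1 - y i) / (1 - a)) = 0) :
    ∑ i ∈ s, mixturePosterior a (E i) + ∑ i ∈ t, y i = a * (#s + #t) := by
  have hpos : 0 < a * (1 - a) := mul_pos ha.1 (by linarith [ha.2])
  rw [sum_congr rfl fun i hi => sub_one_div_mixture_denom ha (hE i hi),
    sum_congr rfl fun i _ => bernoulli_score_eq ha (y i), ← sum_div, ← sum_div,
    ← add_div, div_eq_zero_iff, sum_sub_distrib, sum_sub_distrib, sum_const, sum_const,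
    nsmul_eq_mul, nsmul_eq_mul] at h
  rcases h with h | h
  · linarith
  · exact absurd h hpos.ne'

end MixturePosterior

lemma mixturePosterior_exp {a : ℝ} (ha : a ∈ Set.Ioo 0 1) (x : ℝ) :
    mixturePosterior a (exp x) = exp (x + log (a / (1 - a))) / (1 + exp (x + log (a / (1 - a)))) := by
  have h1a : 0 < 1 - a := by linarith [ha.2]
  have := mixture_denom_pos ha (exp_pos x)
  rw [mixturePosterior, exp_add, exp_log (div_pos ha.1 h1a)]
  field_simp

lemma sum_mul_add_ite_eq {ι : Type*} [Fintype ι] [DecidableEq ι] (z β : ι → ℝ) (j₀ : ι) (c : ℝ) :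
    ∑ j, z j * (β j + if j = j₀ then c else 0) = ∑ j, z j * β j + z j₀ * c := by
  simp only [mul_add, mul_ite, mul_zero, sum_add_distrib, sum_ite_eq', mem_univ, if_true]

theorem m1_reduces_to_logistic_score_general
    (d n N : ℕ) (hnN : n ≤ N)
    (z : ℕ → Fin (d + 1) → ℝ) (y : ℕ → ℝ) (β : Fin (d + 1) → ℝ) (ρ α : ℝ)
    (hz : ∀ i, z i 0 = 1)
    (hρ : ρ ∈ Set.Ioo (0 : ℝ) 1) (hα : α ∈ Set.Ioo (0 : ℝ) 1)
    (ha : ∑ i ∈ Finset.range N,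
      (1 - Real.exp (∑ j, z i j * β j)) / (1 - α + α * Real.exp (∑ j, z i j * β j)) = 0)
    (hb : ∑ i ∈ Finset.Ico n N,
        (Real.exp (∑ j, z i j * β j) - 1) / (1 - ρ + ρ * Real.exp (∑ j, z i j * β j))
      + ∑ i ∈ Finset.range n, (y i / ρ - (1 - y i) / (1 - ρ)) = 0)
    (hc : ∀ k : Fin (d + 1),
        ∑ i ∈ Finset.range n, y i * z i k
      + ∑ i ∈ Finset.Ico n N,
          ρ * Real.exp (∑ j, z i j * β j) * z i k / (1 - ρ + ρ * Real.exp (∑ j, z i j * β j))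
      - ∑ i ∈ Finset.range N,
          α * Real.exp (∑ j, z i j * β j) * z i k / (1 - α + α * Real.exp (∑ j, z i j * β j))
        = 0) :
    (∀ k : Fin (d + 1),
      ∑ i ∈ Finset.range n,
        (y i - ρ * Real.exp (∑ j, z i j * β j)
            / (1 - ρ + ρ * Real.exp (∑ j, z i j * β j))) * z i k = 0)
    ∧ (∀ k : Fin (d + 1),
      ∑ i ∈ Finset.range n,
        (y i - Real.exp (∑ j, z i j * (β j + if j = 0 then Real.log (ρ / (1 - ρ)) else 0))
            / (1 + Real.exp (∑ j, z i j * (β j + if j = 0 then Real.log (ρ / (1 - ρ)) else 0))))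
          * z i k = 0) := by
  let E i := exp (∑ j, z i j * β j)
  have hc' : ∀ k, ∑ i ∈ range n, y i * z i k + ∑ i ∈ Ico n N, mixturePosterior ρ (E i) * z i k
      - (∑ i ∈ range n, mixturePosterior α (E i) * z i k
        + ∑ i ∈ Ico n N, mixturePosterior α (E i) * z i k) = 0 := fun k => by
    simpa only [mixturePosterior, mul_div_right_comm, ← sum_range_add_sum_Ico _ hnN] using hc k
  have hαρ : (ρ - α) * N = 0 := by
    have hA := sum_mixturePosterior_eq_of_score hα (fun _ _ => exp_pos _) ha
    have hB := sum_mixturePosterior_add_sum_eq_of_score hρ (fun _ _ => exp_pos _) hb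
    have hC := hc' 0
    rw [← sum_range_add_sum_Ico _ hnN] at hA
    simp only [hz, mul_one, card_range, Nat.card_Ico] at hA hB hC
    rw [Nat.cast_sub hnN] at hB
    linarith
  have score : ∀ k, ∑ i ∈ range n, (y i - mixturePosterior ρ (E i)) * z i k = 0 := by
    rcases mul_eq_zero.1 hαρ with h | h
    · obtain rfl : ρ = α := sub_eq_zero.1 h
      intro k
      simpa only [sub_mul, sum_sub_distrib, add_sub_add_right_eq_sub] using hc' k
    · have hN : N = 0 := by exact_mod_cast h
      obtain rfl : n = 0 := by omega
      simp
  refine ⟨score, fun k => ?_⟩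
  simpa only [sum_mul_add_ite_eq, hz, one_mul, ← mixturePosterior_exp hρ] using score k

/-- Under the M1 stationarity equations (a), (b), (c), the parameter `β` satisfies the
supervised logistic score equation on the labeled data only, and equivalently, with
`βᶜ = β + (log(ρ/(1-ρ)), 0, …, 0)ᵀ`, the standard logistic regression score equation
holds: the ETM-based estimator of the logistic parameters coincides with the supervised
logistic MLE. -/
theorem m1_reduces_to_logistic_score
    (d n N : ℕ) (hnN : n ≤ N)
    (z : ℕ → Fin (d + 1) → ℝ) (y : ℕ → ℝ) (β : Fin (d + 1) → ℝ) (ρ α : ℝ)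
    (hz : ∀ i, z i 0 = 1)
    (hy : ∀ i, i < n → y i = 0 ∨ y i = 1)
    (hρ : ρ ∈ Set.Ioo (0 : ℝ) 1) (hα : α ∈ Set.Ioo (0 : ℝ) 1)
    (ha : ∑ i ∈ Finset.range N,
      (1 - Real.exp (∑ j, z i j * β j)) / (1 - α + α * Real.exp (∑ j, z i j * β j)) = 0)
    (hb : ∑ i ∈ Finset.Ico n N,
        (Real.exp (∑ j, z i j * β j) - 1) / (1 - ρ + ρ * Real.exp (∑ j, z i j * β j))
      + ∑ i ∈ Finset.range n, (y i / ρ - (1 - y i) / (1 - ρ)) = 0)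
    (hc : ∀ k : Fin (d + 1),
        ∑ i ∈ Finset.range n, y i * z i k
      + ∑ i ∈ Finset.Ico n N,
          ρ * Real.exp (∑ j, z i j * β j) * z i k / (1 - ρ + ρ * Real.exp (∑ j, z i j * β j))
      - ∑ i ∈ Finset.range N,
          α * Real.exp (∑ j, z i j * β j) * z i k / (1 - α + α * Real.exp (∑ j, z i j * β j))
        = 0) :
    (∀ k : Fin (d + 1),
      ∑ i ∈ Finset.range n,
        (y i - ρ * Real.exp (∑ j, z i j * β j)
            / (1 - ρ + ρ * Real.exp (∑ j, z i j * β j))) * z i k = 0)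
    ∧ (∀ k : Fin (d + 1),
      ∑ i ∈ Finset.range n,
        (y i - Real.exp (∑ j, z i j * (β j + if j = 0 then Real.log (ρ / (1 - ρ)) else 0))
            / (1 + Real.exp (∑ j, z i j * (β j + if j = 0 then Real.log (ρ / (1 - ρ)) else 0))))
          * z i k = 0) :=
  m1_reduces_to_logistic_score_general d n N hnN z y β ρ α hz hρ hα ha hb hc
end

section
/- Let $\rho \in (0,1)$ and for $i = 1,\dots,N$ let $p_i = \frac{\exp(z_i^T\beta^c)}{1+\exp(z_i^T\beta^c)}$. If $\sum_{i=1}^N \frac{1-\exp(z_i^T\beta)}{1-\rho+\rho\exp(z_i^T\beta)} = 0$ where $\beta^c = \beta + (\log\frac{\rho}{1-\rho},0,\dots,0)^T$, then $\rho = \frac{1}{N}\sum_{i=1}^N p_i$, i.e., the fitted class proportion equals the average of the fitted logistic probabilities over all $N$ data points. -/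
open Real Finset

/-- If `ρ ∈ (0,1)` satisfies the constraint `∑ᵢ (1 - exp(z_iᵀβ))/(1-ρ+ρ exp(z_iᵀβ)) = 0`
and `βᶜ = β + (log(ρ/(1-ρ)), 0, …, 0)ᵀ`, then `ρ` equals the average of the fitted
logistic probabilities `p_i = exp(z_iᵀβᶜ)/(1+exp(z_iᵀβᶜ))` over all `N` data points. -/
theorem rho_eq_mean_fitted_prob
    (d N : ℕ) (hN : 0 < N)
    (z : ℕ → Fin (d + 1) → ℝ) (β : Fin (d + 1) → ℝ) (ρ : ℝ)
    (hz : ∀ i, z i 0 = 1)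
    (hρ : ρ ∈ Set.Ioo (0 : ℝ) 1)
    (h : ∑ i ∈ Finset.range N,
      (1 - Real.exp (∑ j, z i j * β j)) / (1 - ρ + ρ * Real.exp (∑ j, z i j * β j)) = 0) :
    ρ = (1 / N) * ∑ i ∈ Finset.range N,
      Real.exp (∑ j, z i j * (β j + if j = 0 then Real.log (ρ / (1 - ρ)) else 0))
        / (1 + Real.exp (∑ j, z i j * (β j + if j = 0 then Real.log (ρ / (1 - ρ)) else 0))) := by
  obtain ⟨hρ0, hρ1⟩ := hρ
  have h1ρ : 0 < 1 - ρ := by linarith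
  set L := Real.log (ρ / (1 - ρ)) with hL
  have hexpL : Real.exp L = ρ / (1 - ρ) :=
    Real.exp_log (div_pos hρ0 h1ρ)
  -- pointwise rewrite of each summand
  have key : ∀ i,
      Real.exp (∑ j, z i j * (β j + if j = 0 then L else 0))
        / (1 + Real.exp (∑ j, z i j * (β j + if j = 0 then L else 0)))
      = ρ + ρ * (1 - ρ) *
          ((Real.exp (∑ j, z i j * β j) - 1) / (1 - ρ + ρ * Real.exp (∑ j, z i j * β j))) := by
    intro i
    set t := Real.exp (∑ j, z i j * β j) with ht
    have htpos : 0 < t := Real.exp_pos _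
    have hsum : (∑ j, z i j * (β j + if j = 0 then L else 0))
        = (∑ j, z i j * β j) + L := by
      have : (∑ j, z i j * (β j + if j = 0 then L else 0))
          = (∑ j, z i j * β j) + ∑ j, z i j * (if j = 0 then L else 0) := by
        rw [← Finset.sum_add_distrib]; congr 1; ext j; ring
      rw [this]
      congr 1
      rw [Finset.sum_eq_single 0]
      · simp [hz i]
      · intro b _ hb; simp [hb]
      · simp
    have hexp : Real.exp (∑ j, z i j * (β j + if j = 0 then L else 0))
        = t * (ρ / (1 - ρ)) := by
      rw [hsum, Real.exp_add, hexpL, ht]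
    rw [hexp]
    have hden : 0 < 1 - ρ + ρ * t := by positivity
    rw [div_eq_iff (by positivity : (1 : ℝ) + t * (ρ / (1 - ρ)) ≠ 0)]
    field_simp
    ring
  have hsum : ∑ i ∈ Finset.range N,
      Real.exp (∑ j, z i j * (β j + if j = 0 then L else 0))
        / (1 + Real.exp (∑ j, z i j * (β j + if j = 0 then L else 0)))
      = N * ρ := by
    calc ∑ i ∈ Finset.range N, _ = ∑ i ∈ Finset.range N,
        (ρ + ρ * (1 - ρ) *
          ((Real.exp (∑ j, z i j * β j) - 1) / (1 - ρ + ρ * Real.exp (∑ j, z i j * β j)))) :=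
          Finset.sum_congr rfl fun i _ => key i
      _ = N * ρ := by
          rw [Finset.sum_add_distrib, ← Finset.mul_sum]
          have : ∑ i ∈ Finset.range N,
              (Real.exp (∑ j, z i j * β j) - 1) / (1 - ρ + ρ * Real.exp (∑ j, z i j * β j))
              = 0 := by
            rw [show (0:ℝ) = -0 by ring, ← h, ← Finset.sum_neg_distrib]
            exact Finset.sum_congr rfl fun i _ => by ring
          rw [this]
          simp [mul_comm]
  rw [hsum]
  have hN' : (N : ℝ) ≠ 0 := Nat.cast_ne_zero.mpr hN.ne'
  field_simp
end

section
/- Let $\psi$ be a random vector with $\mathbb{E}[\psi] = 0$ and finite variance $G = \mathrm{var}(\psi)/n$ (scaled), let $S$ be a random vector with $\mathbb{E}[S]=0$ and $\mathrm{var}(S)/N = U^{-1}$ for an invertible symmetric matrix $U$, and suppose $\mathbb{E}[\psi S^T] = nH$ for an invertible matrix $H$. Then $\frac{1}{N} U \preceq \frac{1}{n} H^{-1} G H^{-T}$, where $A \preceq B$ means $B - A$ is positive semi-definite. -/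
/-!
The joint second-moment matrix of `(ψ, S)` is the block matrix `[[n G, n H], [n Hᵀ, N U⁻¹]]`,
and it is positive semidefinite. Conjugating it by the block row `[H⁻¹ / n, -U / N]` gives the
second moment of `H⁻¹ ψ / n - U S / N`; since `(H⁻¹ / n)(n H) = 1` and `(U / N)(N U⁻¹) = 1`, the
cross terms cancel and what remains is `(1/n) H⁻¹ G H⁻ᵀ - (1/N) U`.
-/

open MeasureTheory Matrix

namespace Matrix

theorem PosSemidef.mul_mul_conjTranspose_sub_of_fromBlocks {m n R : Type*}
    [Fintype m] [Fintype n] [DecidableEq n] [Ring R] [PartialOrder R] [StarRing R]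
    {G : Matrix m m R} {H : Matrix m n R} {V : Matrix n n R} {A : Matrix n m R}
    {B : Matrix n n R} (hM : (fromBlocks G H Hᴴ V).PosSemidef) (hA : A * H = 1)
    (hB : B * V = 1) : (A * G * Aᴴ - B).PosSemidef := by
  have key := hM.mul_mul_conjTranspose_same (fromCols A (-B))
  rwa [conjTranspose_fromCols_eq_fromRows_conjTranspose, fromCols_mul_fromBlocks,
    fromCols_mul_fromRows, Matrix.neg_mul, Matrix.neg_mul, hB, hA, add_neg_cancel,
    Matrix.zero_mul, add_zero, ← sub_eq_add_neg, Matrix.sub_mul, Matrix.mul_assoc B,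
    ← conjTranspose_mul, hA, conjTranspose_one, Matrix.mul_one] at key

end Matrix

section CrossMoment

variable {Ω ι κ : Type*} [MeasurableSpace Ω] {μ : Measure Ω}

noncomputable def crossMoment (μ : Measure Ω) (f : Ω → ι → ℝ) (g : Ω → κ → ℝ) :
    Matrix ι κ ℝ :=
  of fun i j => ∫ ω, f ω i * g ω j ∂μ

theorem crossMoment_swap (f : Ω → ι → ℝ) (g : Ω → κ → ℝ) :
    crossMoment μ g f = (crossMoment μ f g)ᵀ := by
  ext i j
  simp only [crossMoment, transpose_apply, of_apply, mul_comm]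

theorem crossMoment_sumElim (f : Ω → ι → ℝ) (g : Ω → κ → ℝ) :
    crossMoment μ (fun ω => Sum.elim (f ω) (g ω)) (fun ω => Sum.elim (f ω) (g ω)) =
      fromBlocks (crossMoment μ f f) (crossMoment μ f g) (crossMoment μ g f)
        (crossMoment μ g g) := by
  ext (i | i) (j | j) <;> rfl

theorem integrable_sumElim_mul_sumElim {f : Ω → ι → ℝ} {g : Ω → κ → ℝ}
    (hff : ∀ i j, Integrable (fun ω => f ω i * f ω j) μ)
    (hfg : ∀ i j, Integrable (fun ω => f ω i * g ω j) μ)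
    (hgg : ∀ i j, Integrable (fun ω => g ω i * g ω j) μ) :
    ∀ a b, Integrable (fun ω => Sum.elim (f ω) (g ω) a * Sum.elim (f ω) (g ω) b) μ
  | .inl i, .inl j => hff i j
  | .inl i, .inr j => hfg i j
  | .inr i, .inl j => (hfg j i).congr (.of_forall fun _ => mul_comm _ _)
  | .inr i, .inr j => hgg i j

variable [Fintype ι] [Fintype κ]

theorem dotProduct_crossMoment_mulVec {f : Ω → ι → ℝ} {g : Ω → κ → ℝ}
    (hfg : ∀ i j, Integrable (fun ω => f ω i * g ω j) μ) (a : ι → ℝ) (c : κ → ℝ) :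
    a ⬝ᵥ crossMoment μ f g *ᵥ c = ∫ ω, (a ⬝ᵥ f ω) * (g ω ⬝ᵥ c) ∂μ := by
  have hint (i : ι) (j : κ) : Integrable (fun ω => a i * c j * (f ω i * g ω j)) μ :=
    (hfg i j).const_mul _
  calc a ⬝ᵥ crossMoment μ f g *ᵥ c = ∑ i, ∑ j, ∫ ω, a i * c j * (f ω i * g ω j) ∂μ := by
        simp only [dotProduct, mulVec, crossMoment, of_apply, Finset.mul_sum,
          integral_const_mul]
        exact Finset.sum_congr rfl fun i _ => Finset.sum_congr rfl fun j _ => by ring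
    _ = ∫ ω, ∑ i, ∑ j, a i * c j * (f ω i * g ω j) ∂μ := by
        rw [integral_finsetSum _ fun i _ => integrable_finsetSum _ fun j _ => hint i j]
        exact Finset.sum_congr rfl fun i _ => (integral_finsetSum _ fun j _ => hint i j).symm
    _ = ∫ ω, (a ⬝ᵥ f ω) * (g ω ⬝ᵥ c) ∂μ := by
        simp only [dotProduct, Finset.sum_mul_sum]
        exact integral_congr_ae (.of_forall fun ω => Finset.sum_congr rfl fun i _ =>
          Finset.sum_congr rfl fun j _ => by ring)

theorem posSemidef_crossMoment_self {f : Ω → ι → ℝ}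
    (hf : ∀ i j, Integrable (fun ω => f ω i * f ω j) μ) :
    (crossMoment μ f f).PosSemidef := by
  refine .of_dotProduct_mulVec_nonneg ?_ fun x => ?_
  · rw [IsHermitian, conjTranspose_eq_transpose_of_trivial, ← crossMoment_swap]
  · rw [star_trivial, dotProduct_crossMoment_mulVec hf]
    refine integral_nonneg fun ω => ?_
    rw [dotProduct_comm (f ω)]
    exact mul_self_nonneg _

end CrossMoment

theorem variance_comparison_general
    {Ω : Type*} [MeasurableSpace Ω] (μ : Measure Ω)
    (k : ℕ) (ψ S : Ω → Fin k → ℝ) (n N : ℝ) (hn : 0 < n) (hN : 0 < N)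
    (G H U : Matrix (Fin k) (Fin k) ℝ)
    (hU : IsUnit U.det) (hH : IsUnit H.det)
    (hintψψ : ∀ i j, Integrable (fun ω => ψ ω i * ψ ω j) μ)
    (hintSS : ∀ i j, Integrable (fun ω => S ω i * S ω j) μ)
    (hintψS : ∀ i j, Integrable (fun ω => ψ ω i * S ω j) μ)
    (hG : ∀ i j, ∫ ω, ψ ω i * ψ ω j ∂μ = n * G i j)
    (hUinv : ∀ i j, ∫ ω, S ω i * S ω j ∂μ = N * U⁻¹ i j)
    (hcross : ∀ i j, ∫ ω, ψ ω i * S ω j ∂μ = n * H i j) :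
    ((1 / n) • (H⁻¹ * G * (H⁻¹)ᵀ) - (1 / N) • U).PosSemidef := by
  have hψψ : crossMoment μ ψ ψ = n • G := ext hG
  have hψS : crossMoment μ ψ S = n • H := ext hcross
  have hSS : crossMoment μ S S = N • U⁻¹ := ext hUinv
  have hM := posSemidef_crossMoment_self (integrable_sumElim_mul_sumElim hintψψ hintψS hintSS)
  rw [crossMoment_sumElim, crossMoment_swap ψ S, hψψ, hψS, hSS,
    ← conjTranspose_eq_transpose_of_trivial] at hM
  have hA : (n⁻¹ • H⁻¹) * (n • H) = 1 := by
    rw [smul_mul_smul_comm, inv_mul_cancel₀ hn.ne', one_smul, nonsing_inv_mul H hH]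
  have hB : (N⁻¹ • U) * (N • U⁻¹) = 1 := by
    rw [smul_mul_smul_comm, inv_mul_cancel₀ hN.ne', one_smul, mul_nonsing_inv U hU]
  have hAGA : (n⁻¹ • H⁻¹) * (n • G) * (n⁻¹ • H⁻¹)ᴴ = n⁻¹ • (H⁻¹ * G * H⁻¹ᵀ) := by
    simp only [conjTranspose_eq_transpose_of_trivial, transpose_smul, Matrix.smul_mul,
      Matrix.mul_smul, smul_smul]
    field_simp
  rw [one_div, one_div, ← hAGA]
  exact PosSemidef.mul_mul_conjTranspose_sub_of_fromBlocks hM hA hB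

/-- Abstract variance-comparison lemma: if `ψ` and `S` are mean-zero random vectors
with `var(ψ) = n G`, `var(S) = N U⁻¹` and cross-moment `E[ψ Sᵀ] = n H`, where `U` is
symmetric invertible and `H` is invertible, then `(1/N) U ⪯ (1/n) H⁻¹ G H⁻ᵀ` in the
Loewner (positive semi-definite) order. -/
theorem variance_comparison
    {Ω : Type*} [MeasurableSpace Ω] (μ : Measure Ω) [IsProbabilityMeasure μ]
    (k : ℕ) (ψ S : Ω → Fin k → ℝ) (n N : ℝ) (hn : 0 < n) (hN : 0 < N)
    (G H U : Matrix (Fin k) (Fin k) ℝ)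
    (hGsymm : G.IsSymm) (hUsymm : U.IsSymm)
    (hU : IsUnit U.det) (hH : IsUnit H.det)
    (hmeanψ : ∀ i, ∫ ω, ψ ω i ∂μ = 0)
    (hmeanS : ∀ i, ∫ ω, S ω i ∂μ = 0)
    (hintψψ : ∀ i j, Integrable (fun ω => ψ ω i * ψ ω j) μ)
    (hintSS : ∀ i j, Integrable (fun ω => S ω i * S ω j) μ)
    (hintψS : ∀ i j, Integrable (fun ω => ψ ω i * S ω j) μ)
    (hG : ∀ i j, ∫ ω, ψ ω i * ψ ω j ∂μ = n * G i j)
    (hUinv : ∀ i j, ∫ ω, S ω i * S ω j ∂μ = N * U⁻¹ i j)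
    (hcross : ∀ i j, ∫ ω, ψ ω i * S ω j ∂μ = n * H i j) :
    ((1 / n) • (H⁻¹ * G * (H⁻¹)ᵀ) - (1 / N) • U).PosSemidef :=
  variance_comparison_general μ k ψ S n N hn hN G H U hU hH hintψψ hintSS hintψS hG hUinv hcross
end

section
/- Let $y \sim \mathrm{Bernoulli}(\rho)$ with $\rho \in (0,1)$ and let $x$ be a random vector whose conditional law given $y=j$ is $G_j$, where $\mathrm{d}G_1 = e^{z^T\beta}\,\mathrm{d}G_0$ with $z=(1,x^T)^T$. Then $\mathrm{cov}\left(\left\{y - \frac{\rho e^{z^T\beta}}{1-\rho+\rho e^{z^T\beta}}\right\} z,\; \frac{y-\rho}{\rho(1-\rho)}\right) = \int \frac{e^{z^T\beta}\, z\,\mathrm{d}G_0}{1-\rho+\rho e^{z^T\beta}}$. -/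
open MeasureTheory Real

/-- `e^{zᵀβ}` with `z = (1, xᵀ)ᵀ`. -/
noncomputable def tiltFun (d : ℕ) (β : Fin (d + 1) → ℝ) (x : Fin d → ℝ) : ℝ :=
  Real.exp (β 0 + ∑ j, x j * β j.succ)

/-- `z = (1, xᵀ)ᵀ`. -/
def zVec (d : ℕ) (x : Fin d → ℝ) : Fin (d + 1) → ℝ := Fin.cons 1 x

/-- Joint law of `(x, y)`: `y ~ Bernoulli(ρ)` and `x | y = j ~ G_j`, where
`dG₁ = e^{zᵀβ} dG₀`. -/
noncomputable def jointLaw (d : ℕ) (G0 : Measure (Fin d → ℝ)) (β : Fin (d + 1) → ℝ)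
    (ρ : ℝ) : Measure ((Fin d → ℝ) × ℝ) :=
  ENNReal.ofReal ρ •
      (G0.withDensity (fun x => ENNReal.ofReal (tiltFun d β x))).map (fun x => (x, (1 : ℝ)))
    + ENNReal.ofReal (1 - ρ) • G0.map (fun x => (x, (0 : ℝ)))

/-- The logistic residual score: `{y - ρ e^{zᵀβ}/(1-ρ+ρ e^{zᵀβ})} z`. -/
noncomputable def psiScore (d : ℕ) (β : Fin (d + 1) → ℝ) (ρ : ℝ)
    (p : (Fin d → ℝ) × ℝ) (k : Fin (d + 1)) : ℝ :=
  (p.2 - ρ * tiltFun d β p.1 / (1 - ρ + ρ * tiltFun d β p.1)) * zVec d p.1 k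

/-! Conditioning on the label, `ψ(x, 1) = (1 - ρ) w(x) / e^{zᵀβ}` and `ψ(x, 0) = -ρ w(x)`, where
`w = e^{zᵀβ} z / (1 - ρ + ρ e^{zᵀβ})`. Against the joint law the two branches of `E[ψ]` cancel,
so the covariance is `E[ψ · (y - ρ)/(ρ(1 - ρ))] = (1 - ρ) ∫ w dG₀ + ρ ∫ w dG₀`. -/

noncomputable def tiltedZ (d : ℕ) (β : Fin (d + 1) → ℝ) (ρ : ℝ) (x : Fin d → ℝ)
    (k : Fin (d + 1)) : ℝ :=
  tiltFun d β x * zVec d x k / (1 - ρ + ρ * tiltFun d β x)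

lemma tiltFun_pos (d : ℕ) (β : Fin (d + 1) → ℝ) (x : Fin d → ℝ) : 0 < tiltFun d β x :=
  Real.exp_pos _

lemma measurable_tiltFun (d : ℕ) (β : Fin (d + 1) → ℝ) : Measurable (tiltFun d β) :=
  (measurable_const.add
    (Finset.measurable_sum _ fun j _ => (measurable_pi_apply j).mul measurable_const)).exp

lemma one_sub_add_mul_tiltFun_pos (d : ℕ) (β : Fin (d + 1) → ℝ) {ρ : ℝ}
    (hρ : ρ ∈ Set.Icc (0 : ℝ) 1) (x : Fin d → ℝ) : 0 < 1 - ρ + ρ * tiltFun d β x := by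
  have ht := tiltFun_pos d β x
  rcases hρ.2.lt_or_eq with hlt | rfl
  · nlinarith [hρ.1]
  · linarith

lemma integral_jointLaw (d : ℕ) (G0 : Measure (Fin d → ℝ)) (β : Fin (d + 1) → ℝ) {ρ : ℝ}
    (hρ : ρ ∈ Set.Icc (0 : ℝ) 1) {f : (Fin d → ℝ) × ℝ → ℝ}
    (hf : Integrable f (jointLaw d G0 β ρ)) :
    ∫ p, f p ∂(jointLaw d G0 β ρ)
      = ρ * ∫ x, tiltFun d β x * f (x, 1) ∂G0 + (1 - ρ) * ∫ x, f (x, 0) ∂G0 := by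
  rw [jointLaw] at hf ⊢
  obtain ⟨hf1, hf0⟩ := integrable_add_measure.mp hf
  rw [integral_add_measure hf1 hf0, integral_smul_measure, integral_smul_measure,
    ENNReal.toReal_ofReal hρ.1, ENNReal.toReal_ofReal (sub_nonneg.mpr hρ.2),
    (measurableEmbedding_prod_mk_right 1).integral_map,
    (measurableEmbedding_prod_mk_right 0).integral_map,
    integral_withDensity_eq_integral_toReal_smul (measurable_tiltFun d β).ennreal_ofReal
      (ae_of_all _ fun _ => ENNReal.ofReal_lt_top)]
  simp only [ENNReal.toReal_ofReal (tiltFun_pos d β _).le, smul_eq_mul]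

section score

variable (d : ℕ) (β : Fin (d + 1) → ℝ) {ρ : ℝ} (x : Fin d → ℝ) (k : Fin (d + 1))

lemma tiltFun_mul_psiScore_one (hρ : ρ ∈ Set.Icc (0 : ℝ) 1) :
    tiltFun d β x * psiScore d β ρ (x, 1) k = (1 - ρ) * tiltedZ d β ρ x k := by
  have hD := (one_sub_add_mul_tiltFun_pos d β hρ x).ne'
  have hresidual : 1 - ρ * tiltFun d β x / (1 - ρ + ρ * tiltFun d β x)
      = (1 - ρ) / (1 - ρ + ρ * tiltFun d β x) := by
    field_simp
    ring
  simp only [psiScore, tiltedZ, hresidual]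
  ring

lemma psiScore_zero : psiScore d β ρ (x, 0) k = -ρ * tiltedZ d β ρ x k := by
  simp only [psiScore, tiltedZ]
  ring

end score

variable {d : ℕ} {G0 : Measure (Fin d → ℝ)} {β : Fin (d + 1) → ℝ} {ρ : ℝ} {k : Fin (d + 1)}

/-- Unbiased pointwise in `x`: `ρ e^{zᵀβ} ψ(x, 1) + (1 - ρ) ψ(x, 0) = 0`. -/
lemma integral_psiScore_jointLaw (hρ : ρ ∈ Set.Icc (0 : ℝ) 1)
    (hψ : Integrable (fun p => psiScore d β ρ p k) (jointLaw d G0 β ρ)) :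
    ∫ p, psiScore d β ρ p k ∂(jointLaw d G0 β ρ) = 0 := by
  simp only [integral_jointLaw d G0 β hρ hψ, tiltFun_mul_psiScore_one d β _ k hρ,
    psiScore_zero, integral_const_mul]
  ring

lemma integral_psiScore_mul_label (hρ : ρ ∈ Set.Ioo (0 : ℝ) 1)
    (hψ : Integrable (fun p => psiScore d β ρ p k * ((p.2 - ρ) / (ρ * (1 - ρ))))
      (jointLaw d G0 β ρ)) :
    ∫ p, psiScore d β ρ p k * ((p.2 - ρ) / (ρ * (1 - ρ))) ∂(jointLaw d G0 β ρ)
      = ∫ x, tiltedZ d β ρ x k ∂G0 := by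
  have hρ0 : ρ ≠ 0 := hρ.1.ne'
  have hρ1 : 1 - ρ ≠ 0 := (sub_pos.mpr hρ.2).ne'
  have h1 (x : Fin d → ℝ) : tiltFun d β x * (psiScore d β ρ (x, 1) k * ((1 - ρ) / (ρ * (1 - ρ))))
      = ρ⁻¹ * ((1 - ρ) * tiltedZ d β ρ x k) := by
    rw [← mul_assoc, tiltFun_mul_psiScore_one d β x k (Set.Ioo_subset_Icc_self hρ)]
    field_simp
  have h0 (x : Fin d → ℝ) : psiScore d β ρ (x, 0) k * ((0 - ρ) / (ρ * (1 - ρ)))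
      = (1 - ρ)⁻¹ * (ρ * tiltedZ d β ρ x k) := by
    rw [psiScore_zero]
    field_simp
    ring
  simp only [integral_jointLaw d G0 β (Set.Ioo_subset_Icc_self hρ) hψ, h1, h0,
    integral_const_mul]
  field_simp
  ring

theorem cov_score_label_general
    (d : ℕ) (G0 : Measure (Fin d → ℝ))
    (β : Fin (d + 1) → ℝ) (ρ : ℝ) (hρ : ρ ∈ Set.Ioo (0 : ℝ) 1)
    (hint1 : ∀ k, Integrable
      (fun p => psiScore d β ρ p k * ((p.2 - ρ) / (ρ * (1 - ρ)))) (jointLaw d G0 β ρ))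
    (hint2 : ∀ k, Integrable (fun p => psiScore d β ρ p k) (jointLaw d G0 β ρ)) :
    ∀ k : Fin (d + 1),
      (∫ p, psiScore d β ρ p k * ((p.2 - ρ) / (ρ * (1 - ρ))) ∂(jointLaw d G0 β ρ))
        - (∫ p, psiScore d β ρ p k ∂(jointLaw d G0 β ρ))
          * (∫ p, (p.2 - ρ) / (ρ * (1 - ρ)) ∂(jointLaw d G0 β ρ))
      = ∫ x, tiltFun d β x * zVec d x k / (1 - ρ + ρ * tiltFun d β x) ∂G0 := by
  intro k
  rw [integral_psiScore_mul_label hρ (hint1 k),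
    integral_psiScore_jointLaw (Set.Ioo_subset_Icc_self hρ) (hint2 k), zero_mul, sub_zero]
  rfl

/-- Covariance computation (Lemma S4): the covariance of the logistic score
`{y - ρe^{zᵀβ}/(1-ρ+ρe^{zᵀβ})} z` with the centered label `(y-ρ)/(ρ(1-ρ))` equals
`∫ e^{zᵀβ} z dG₀/(1-ρ+ρ e^{zᵀβ})`, componentwise. -/
theorem cov_score_label
    (d : ℕ) (G0 : Measure (Fin d → ℝ)) [IsProbabilityMeasure G0]
    (β : Fin (d + 1) → ℝ) (ρ : ℝ) (hρ : ρ ∈ Set.Ioo (0 : ℝ) 1)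
    (hint1 : ∀ k, Integrable
      (fun p => psiScore d β ρ p k * ((p.2 - ρ) / (ρ * (1 - ρ)))) (jointLaw d G0 β ρ))
    (hint2 : ∀ k, Integrable (fun p => psiScore d β ρ p k) (jointLaw d G0 β ρ))
    (hint3 : Integrable (fun p : (Fin d → ℝ) × ℝ => (p.2 - ρ) / (ρ * (1 - ρ)))
      (jointLaw d G0 β ρ))
    (hint4 : ∀ k, Integrable
      (fun x => tiltFun d β x * zVec d x k / (1 - ρ + ρ * tiltFun d β x)) G0) :
    ∀ k : Fin (d + 1),
      (∫ p, psiScore d β ρ p k * ((p.2 - ρ) / (ρ * (1 - ρ))) ∂(jointLaw d G0 β ρ))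
        - (∫ p, psiScore d β ρ p k ∂(jointLaw d G0 β ρ))
          * (∫ p, (p.2 - ρ) / (ρ * (1 - ρ)) ∂(jointLaw d G0 β ρ))
      = ∫ x, tiltFun d β x * zVec d x k / (1 - ρ + ρ * tiltFun d β x) ∂G0 :=
  cov_score_label_general d G0 β ρ hρ hint1 hint2
end
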